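/- arXiv:2002.03668 — 3 statements merged into one kernel-verified Lean document; each statement's English description precedes it below -/
import Mathlib

section
/- Let A be a deterministic finite automaton with m states over alphabet Σ, let u ∈ Σ*, v ∈ Σ⁺, and let i ≤ |u|. If there exists j > |u| such that A accepts the finite word (uv^ω)[i,j), then there exists k with |u| ≤ k ≤ |u| + m·|v| such that A accepts (uv^ω)[i,k) and k ≡ j (mod |v|). -/
def upWord {A : Type*} (u v : List A) (hv : v ≠ []) : ℕ → A :=
  fun n =>
    if h : n < u.length then u.get ⟨n, h⟩
    else v.get ⟨(n - u.length) % v.length, Nat.mod_lt _ (List.length_pos_iff.mpr hv)⟩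

def suffix {A : Type*} (w : ℕ → A) (i : ℕ) : ℕ → A := fun n => w (i + n)

def wordInfix {A : Type*} (w : ℕ → A) (i j : ℕ) : List A :=
  (List.range (j - i)).map fun n => w (i + n)

/-!
Write `j = |u| + q|v| + r` with `r < |v|`. After reading `(uv^ω)[i, |u| + t|v|)` the automaton is
in state `f^t s₀`, where `s₀` is its state after `(uv^ω)[i, |u|)` and `f s = δ*(s, v)`; the
remaining `r` letters `(uv^ω)[|u|, |u| + r)` do not depend on `t`. By pigeonhole on the `m`
states, `f^q s₀ = f^t s₀` for some `t < m`, and `k = |u| + t|v| + r` works.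
-/

theorem Function.exists_lt_card_iterate_eq {α : Type*} [Fintype α] (f : α → α) (x : α) (n : ℕ) :
    ∃ k < Fintype.card α, f^[k] x = f^[n] x := by
  obtain ⟨a, b, hab, hb, hfab⟩ : ∃ a b, a < b ∧ b ≤ Fintype.card α ∧ f^[a] x = f^[b] x := by
    obtain ⟨a, b, hne, hfab⟩ := Fintype.exists_ne_map_eq_of_card_lt
      (fun a : Fin (Fintype.card α + 1) => f^[a] x) (by simp)
    rcases Nat.lt_or_gt_of_ne (Fin.val_ne_of_ne hne) with h | h
    · exact ⟨a, b, h, Nat.lt_succ_iff.mp b.2, hfab⟩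
    · exact ⟨b, a, h, Nat.lt_succ_iff.mp a.2, hfab.symm⟩
  induction n using Nat.strong_induction_on with
  | _ n ih =>
    by_cases hn : n < Fintype.card α
    · exact ⟨n, hn, rfl⟩
    have hrepeat : f^[n - b + a] x = f^[n] x := by
      rw [Function.iterate_add_apply, hfab, ← Function.iterate_add_apply,
        Nat.sub_add_cancel (by omega)]
    obtain ⟨k, hk, hfk⟩ := ih (n - b + a) (by omega)
    exact ⟨k, hk, hfk.trans hrepeat⟩

lemma wordInfix_append {A : Type*} (w : ℕ → A) {i a b : ℕ} (hia : i ≤ a) (hab : a ≤ b) :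
    wordInfix w i b = wordInfix w i a ++ wordInfix w a b := by
  unfold wordInfix
  rw [show b - i = (a - i) + (b - a) by omega, List.range_add, List.map_append, List.map_map]
  congr 1
  refine List.map_congr_left fun n _ => ?_
  simp only [Function.comp_apply]
  congr 1
  omega

lemma length_wordInfix {A : Type*} (w : ℕ → A) (i j : ℕ) : (wordInfix w i j).length = j - i := by
  simp [wordInfix]

section UltimatelyPeriodic

variable {A : Type*} (u v : List A) (hv : v ≠ [])

lemma upWord_length_add (c : ℕ) :
    upWord u v hv (u.length + c) = v[c % v.length]'(Nat.mod_lt _ (List.length_pos_iff.mpr hv)) := by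
  simp [upWord]

lemma upWord_add_length_of_le {n : ℕ} (hn : u.length ≤ n) :
    upWord u v hv (n + v.length) = upWord u v hv n := by
  obtain ⟨c, rfl⟩ := Nat.exists_eq_add_of_le hn
  simp only [add_assoc, upWord_length_add, Nat.add_mod_right]

lemma wordInfix_upWord_period :
    wordInfix (upWord u v hv) u.length (u.length + v.length) = v := by
  refine List.ext_getElem (by simp [length_wordInfix]) fun n hn _ => ?_
  simp only [length_wordInfix, Nat.add_sub_cancel_left] at hn
  simp [wordInfix, upWord_length_add, Nat.mod_eq_of_lt hn]

lemma wordInfix_upWord_add_length (r : ℕ) :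
    wordInfix (upWord u v hv) (u.length + v.length) (u.length + v.length + r)
      = wordInfix (upWord u v hv) u.length (u.length + r) := by
  simp only [wordInfix, Nat.add_sub_cancel_left]
  refine List.map_congr_left fun n _ => ?_
  rw [add_right_comm, upWord_add_length_of_le u v hv (Nat.le_add_right _ _)]

lemma wordInfix_upWord_length_add_length_add (r : ℕ) :
    wordInfix (upWord u v hv) u.length (u.length + (v.length + r))
      = v ++ wordInfix (upWord u v hv) u.length (u.length + r) := by
  rw [← add_assoc, wordInfix_append _ (Nat.le_add_right _ _) (Nat.le_add_right _ _),
    wordInfix_upWord_period, wordInfix_upWord_add_length]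

lemma DFA.eval_wordInfix_upWord {σ : Type*} (M : DFA A σ) {i : ℕ} (hi : i ≤ u.length) (t r : ℕ) :
    M.eval (wordInfix (upWord u v hv) i (u.length + t * v.length + r))
      = M.evalFrom ((fun s => M.evalFrom s v)^[t] (M.eval (wordInfix (upWord u v hv) i u.length)))
          (wordInfix (upWord u v hv) u.length (u.length + r)) := by
  induction t generalizing r with
  | zero =>
    rw [zero_mul, add_zero, wordInfix_append _ hi (Nat.le_add_right _ _)]
    exact M.evalFrom_of_append _ _ _
  | succ t ih =>
    rw [show u.length + (t + 1) * v.length + r = u.length + t * v.length + (v.length + r) by ring,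
      ih, wordInfix_upWord_length_add_length_add, DFA.evalFrom_of_append,
      Function.iterate_succ_apply']

end UltimatelyPeriodic

theorem dfa_accept_bounded {A σ : Type*} [Fintype σ] (M : DFA A σ) (m : ℕ)
    (hm : Fintype.card σ = m) (u v : List A) (hv : v ≠ []) (i : ℕ) (hi : i ≤ u.length)
    (j : ℕ) (hj : u.length < j)
    (hacc : wordInfix (upWord u v hv) i j ∈ M.accepts) :
    ∃ k, u.length ≤ k ∧ k ≤ u.length + m * v.length ∧
      wordInfix (upWord u v hv) i k ∈ M.accepts ∧ k % v.length = j % v.length := by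
  obtain ⟨q, r, hr, hj_eq⟩ : ∃ q r, r < v.length ∧ j = u.length + q * v.length + r :=
    ⟨(j - u.length) / v.length, (j - u.length) % v.length,
      Nat.mod_lt _ (List.length_pos_iff.mpr hv),
      by have := Nat.div_add_mod' (j - u.length) v.length; omega⟩
  obtain ⟨q', hq', hstate⟩ := Function.exists_lt_card_iterate_eq (fun s => M.evalFrom s v)
    (M.eval (wordInfix (upWord u v hv) i u.length)) q
  refine ⟨u.length + q' * v.length + r, by omega, ?_, ?_, ?_⟩
  · calc u.length + q' * v.length + r ≤ u.length + (q' + 1) * v.length := by rw [add_mul]; omega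
      _ ≤ u.length + m * v.length := by gcongr; omega
  · rw [hj_eq, DFA.mem_accepts, DFA.eval_wordInfix_upWord u v hv M hi] at hacc
    rwa [DFA.mem_accepts, DFA.eval_wordInfix_upWord u v hv M hi, hstate]
  · simp [hj_eq, add_right_comm _ _ r, Nat.add_mul_mod_self_right]
end

section
/- Let A be a DFA with m states over alphabet Σ, u ∈ Σ*, v ∈ Σ⁺, and b = m+1. For any PSL-like semantics, the following 'trigger' condition holds: for all i < |uv|, we have [for all j > i, if A accepts (uv^ω)[i,j) then P(j−1)] if and only if [for all j with i < j ≤ |u| + b·|v|, if A accepts (uv^ω)[i,j) then P(j−1)], provided that P is periodic in the sense that P(x) ↔ P(y) whenever x, y ≥ |u| and x ≡ y (mod |v|). -/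
section

variable {A σ : Type*}

theorem upWord_add_length (u v : List A) (hv : v ≠ []) {x : ℕ} (hx : u.length ≤ x) :
    upWord u v hv (x + v.length) = upWord u v hv x := by
  unfold upWord
  rw [dif_neg (by omega), dif_neg (by omega)]
  congr 2
  rw [Nat.sub_add_comm hx, Nat.add_mod_right]

theorem apply_add_mul_of_apply_add {w : ℕ → A} {L n : ℕ} (hw : ∀ x, L ≤ x → w (x + n) = w x)
    {x : ℕ} (hx : L ≤ x) (k : ℕ) : w (x + k * n) = w x := by
  induction k with
  | zero => simp
  | succ k ih => rw [Nat.succ_mul, ← add_assoc, hw _ (by omega), ih]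

theorem wordInfix_add (w : ℕ → A) (p t : ℕ) :
    wordInfix w p (p + t) = (List.range t).map fun n => w (p + n) := by
  simp [wordInfix]

theorem wordInfix_append_s3 (w : ℕ → A) {i j k : ℕ} (hij : i ≤ j) (hjk : j ≤ k) :
    wordInfix w i j ++ wordInfix w j k = wordInfix w i k := by
  obtain ⟨s, rfl⟩ := Nat.exists_eq_add_of_le hij
  obtain ⟨t, rfl⟩ := Nat.exists_eq_add_of_le hjk
  rw [wordInfix_add, wordInfix_add, add_assoc, wordInfix_add, List.range_add, List.map_append,
    List.map_map]
  simp [Function.comp_def, add_assoc]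

theorem DFA.eval_wordInfix_add_eq (M : DFA A σ) {w : ℕ → A} {i p q : ℕ} (hip : i ≤ p)
    (hiq : i ≤ q) (hw : ∀ x, w (p + x) = w (q + x))
    (h : M.eval (wordInfix w i p) = M.eval (wordInfix w i q)) (t : ℕ) :
    M.eval (wordInfix w i (p + t)) = M.eval (wordInfix w i (q + t)) := by
  rw [← wordInfix_append_s3 w hip (Nat.le_add_right p t),
    ← wordInfix_append_s3 w hiq (Nat.le_add_right q t), DFA.eval,
    DFA.evalFrom_of_append, DFA.evalFrom_of_append, ← DFA.eval, h,
    wordInfix_add, wordInfix_add]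
  simp only [hw]

theorem DFA.exists_eval_wordInfix_sub_mul_eq [Fintype σ] (M : DFA A σ) {w : ℕ → A} {L n : ℕ}
    (hw : ∀ x, L ≤ x → w (x + n) = w x) {i j : ℕ} (hLj : L + Fintype.card σ * n ≤ j)
    (hij : i + Fintype.card σ * n ≤ j) :
    ∃ k, 0 < k ∧ k ≤ Fintype.card σ ∧
      M.eval (wordInfix w i (j - k * n)) = M.eval (wordInfix w i j) := by
  set f : Fin (Fintype.card σ + 1) → σ := fun k => M.eval (wordInfix w i (j - k * n))
  obtain ⟨k₁, k₂, hne, hf⟩ := Fintype.exists_ne_map_eq_of_card_lt f (by simp)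
  obtain ⟨a, b, hab, hfab⟩ : ∃ a b : Fin (Fintype.card σ + 1), a < b ∧ f b = f a := by
    rcases lt_or_gt_of_ne hne with h | h
    exacts [⟨k₁, k₂, h, hf.symm⟩, ⟨k₂, k₁, h, hf⟩]
  have hb : (b : ℕ) * n ≤ Fintype.card σ * n := Nat.mul_le_mul_right n (by omega)
  have hab_n : (a : ℕ) * n ≤ b * n := Nat.mul_le_mul_right n hab.le
  refine ⟨b - a, by omega, by omega, ?_⟩
  have hshift : ∀ x, w (j - b * n + x) = w (j - a * n + x) := fun x => by
    have hjb : j - a * n + x = j - b * n + x + (b - a) * n := by rw [Nat.sub_mul]; omega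
    rw [hjb, apply_add_mul_of_apply_add hw (by omega)]
  have hsync := M.eval_wordInfix_add_eq (by omega) (by omega) hshift hfab (a * n)
  rwa [show j - b * n + a * n = j - (b - a) * n by rw [Nat.sub_mul]; omega,
    show j - a * n + a * n = j by omega] at hsync

end

theorem trigger_unrolling_bound {A σ : Type*} [Fintype σ] (M : DFA A σ) (m b : ℕ)
    (hm : Fintype.card σ = m) (hb : b = m + 1) (u v : List A) (hv : v ≠ [])
    (P : ℕ → Prop)
    (hper : ∀ x y, u.length ≤ x → u.length ≤ y → x % v.length = y % v.length → (P x ↔ P y))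
    (i : ℕ) (hi : i < u.length + v.length) :
    (∀ j, i < j → wordInfix (upWord u v hv) i j ∈ M.accepts → P (j - 1)) ↔
      (∀ j, i < j → j ≤ u.length + b * v.length →
        wordInfix (upWord u v hv) i j ∈ M.accepts → P (j - 1)) := by
  refine ⟨fun h j hij _ => h j hij, fun h j hij hacc => ?_⟩
  subst hb hm
  induction j using Nat.strong_induction_on with
  | _ j ih =>
    by_cases hj : j ≤ u.length + (Fintype.card σ + 1) * v.length
    · exact h j hij hj hacc
    have hj_large : u.length + v.length + Fintype.card σ * v.length < j := by
      have := add_one_mul (Fintype.card σ) v.length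
      omega
    obtain ⟨k, hk, hkm, heq⟩ := M.exists_eval_wordInfix_sub_mul_eq
      (fun x hx => upWord_add_length u v hv hx) (i := i) (j := j) (by omega) (by omega)
    have hkn : k * v.length ≤ Fintype.card σ * v.length := Nat.mul_le_mul_right _ hkm
    have hpos : 0 < k * v.length := Nat.mul_pos hk (List.length_pos_iff.mpr hv)
    have hshort : wordInfix (upWord u v hv) i (j - k * v.length) ∈ M.accepts := by
      rwa [DFA.mem_accepts, heq, ← DFA.mem_accepts]
    refine (hper _ _ (by omega) (by omega) ?_).mp
      (ih _ (by omega) (by omega) hshort)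
    rw [← Nat.add_mul_mod_self_right (j - k * v.length - 1) k]
    congr 1
    omega
end

section
/- For every sample S = (P, N) of finitely many ultimately periodic words over 2^𝒫 with P and N disjoint, there exists an LTL formula φ consistent with S, i.e., α ⊨ φ for all α ∈ P and β ⊭ φ for all β ∈ N. -/
inductive LTL (P : Type*) where
  | atom : P → LTL P
  | not : LTL P → LTL P
  | or : LTL P → LTL P → LTL P
  | next : LTL P → LTL P
  | untl : LTL P → LTL P → LTL P

/-- Satisfaction of an LTL formula at position `i` of the infinite word `w`. -/
def SatAt {P : Type*} (w : ℕ → Set P) : ℕ → LTL P → Prop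
  | i, .atom p => p ∈ w i
  | i, .not φ => ¬ SatAt w i φ
  | i, .or φ ψ => SatAt w i φ ∨ SatAt w i ψ
  | i, .next φ => SatAt w (i + 1) φ
  | i, .untl φ ψ => ∃ j, i ≤ j ∧ SatAt w j ψ ∧ ∀ t, i ≤ t → t < j → SatAt w t φ

/-!
Two distinct words differ in some atom at some position `n`, so `Xⁿ p` or `Xⁿ ¬p` separates
them. Conjunctions of such formulas separate one word from finitely many, and negating and
conjoining once more separates two disjoint finite sets of words.
-/

namespace LTL

variable {P : Type*}

def nextN : ℕ → LTL P → LTL P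
  | 0, φ => φ
  | n + 1, φ => .next (nextN n φ)

def and (φ ψ : LTL P) : LTL P := .not (.or (.not φ) (.not ψ))

theorem satAt_nextN (w : ℕ → Set P) (i n : ℕ) (φ : LTL P) :
    SatAt w i (nextN n φ) ↔ SatAt w (i + n) φ := by
  induction n generalizing i with
  | zero => rfl
  | succ n ih => rw [nextN, SatAt, ih, Nat.add_right_comm, Nat.add_assoc]

theorem satAt_and (w : ℕ → Set P) (i : ℕ) (φ ψ : LTL P) :
    SatAt w i (φ.and ψ) ↔ SatAt w i φ ∧ SatAt w i ψ := by
  simp only [LTL.and, SatAt]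
  tauto

def Separates (A T : Set (ℕ → Set P)) (φ : LTL P) : Prop :=
  (∀ α ∈ A, SatAt α 0 φ) ∧ ∀ β ∈ T, ¬ SatAt β 0 φ

variable {A T T' : Set (ℕ → Set P)} {φ ψ : LTL P}

theorem Separates.not (h : Separates A T φ) : Separates T A φ.not :=
  ⟨h.2, fun α hα hφ => hφ (h.1 α hα)⟩

theorem Separates.and (h : Separates A T φ) (h' : Separates A T' ψ) :
    Separates A (T ∪ T') (φ.and ψ) := by
  refine ⟨fun α hα => (satAt_and ..).2 ⟨h.1 α hα, h'.1 α hα⟩, ?_⟩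
  rintro β (hβ | hβ) hφψ
  · exact h.2 β hβ ((satAt_and ..).1 hφψ).1
  · exact h'.2 β hβ ((satAt_and ..).1 hφψ).2

theorem exists_separates_empty [Nonempty P] (A : Set (ℕ → Set P)) :
    ∃ φ : LTL P, Separates A ∅ φ := by
  obtain ⟨p⟩ := ‹Nonempty P›
  exact ⟨.or (.atom p) (.not (.atom p)), fun α _ => em _, by simp⟩

theorem exists_separates_of_ne {α β : ℕ → Set P} (h : α ≠ β) :
    ∃ φ : LTL P, Separates {α} {β} φ := by
  obtain ⟨n, hn⟩ := Function.ne_iff.1 h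
  obtain ⟨p, hp⟩ : ∃ p, ¬ (p ∈ α n ↔ p ∈ β n) := by
    simpa only [Ne, Set.ext_iff, not_forall] using hn
  by_cases hpα : p ∈ α n
  · refine ⟨nextN n (.atom p), ?_, ?_⟩ <;>
      simp only [Set.mem_singleton_iff, forall_eq, satAt_nextN, zero_add, SatAt] <;> tauto
  · refine ⟨nextN n (.not (.atom p)), ?_, ?_⟩ <;>
      simp only [Set.mem_singleton_iff, forall_eq, satAt_nextN, zero_add, SatAt] <;> tauto

theorem exists_separates_of_finite_right [Nonempty P] (hT : T.Finite)
    (h : ∀ β ∈ T, ∃ φ : LTL P, Separates A {β} φ) : ∃ φ : LTL P, Separates A T φ := by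
  induction T, hT using Set.Finite.induction_on with
  | empty => exact exists_separates_empty A
  | @insert β T _ _ ih =>
    obtain ⟨φ, hφ⟩ := h β (Set.mem_insert β T)
    obtain ⟨ψ, hψ⟩ := ih fun γ hγ => h γ (Set.mem_insert_of_mem β hγ)
    exact ⟨φ.and ψ, hφ.and hψ⟩

theorem exists_separates_of_finite [Nonempty P] (hA : A.Finite) (hT : T.Finite)
    (hAT : Disjoint A T) : ∃ φ : LTL P, Separates A T φ := by
  have separate_one (α : ℕ → Set P) (hα : α ∈ A) : ∃ φ : LTL P, Separates T {α} φ := by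
    obtain ⟨φ, hφ⟩ := exists_separates_of_finite_right hT fun β hβ =>
      exists_separates_of_ne (hAT.ne_of_mem hα hβ)
    exact ⟨φ.not, hφ.not⟩
  obtain ⟨φ, hφ⟩ := exists_separates_of_finite_right hA separate_one
  exact ⟨φ.not, hφ.not⟩

end LTL

theorem consistent_formula_exists_general {P : Type*} [Nonempty P]
    (Pos Neg : Set (ℕ → Set P)) (hPfin : Pos.Finite) (hNfin : Neg.Finite)
    (hdisj : Disjoint Pos Neg) :
    ∃ φ : LTL P, (∀ α ∈ Pos, SatAt α 0 φ) ∧ (∀ β ∈ Neg, ¬ SatAt β 0 φ) :=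
  LTL.exists_separates_of_finite hPfin hNfin hdisj

theorem consistent_formula_exists {P : Type*} [Fintype P] [Nonempty P]
    (Pos Neg : Set (ℕ → Set P)) (hPfin : Pos.Finite) (hNfin : Neg.Finite)
    (hdisj : Disjoint Pos Neg)
    (hup : ∀ w ∈ Pos ∪ Neg, ∃ (u v : List (Set P)) (hv : v ≠ []), w = upWord u v hv) :
    ∃ φ : LTL P, (∀ α ∈ Pos, SatAt α 0 φ) ∧ (∀ β ∈ Neg, ¬ SatAt β 0 φ) :=
  consistent_formula_exists_general Pos Neg hPfin hNfin hdisj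
end
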